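/- arXiv:2511.08905 — 2 statements merged into one kernel-verified Lean document; each statement's English description precedes it below -/
import Mathlib

section
/- Let d ≥ 1 and let M be a d×d real matrix all of whose entries are nonzero (a dense matrix). If x, x' : Fin d → ℝ differ in exactly one coordinate (there is an index l with x' l ≠ x l and x' j = x j for all j ≠ l), then for every index k we have (M.mulVec x') k ≠ (M.mulVec x) k; in particular the Hamming distance between M.mulVec x and M.mulVec x' equals d, so at least half of the coordinates of the ciphertext change. -/
/-! The ciphertext difference `M x' - M x = M (x' - x)` is the `l`-th column of `M` scaled by
the nonzero number `x' l - x l`; a dense matrix has no zero entry in that column. -/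

open Matrix

theorem sub_eq_single_of_forall_ne {ι G : Type*} [DecidableEq ι] [AddGroup G] {x x' : ι → G}
    {l : ι} (hother : ∀ j, j ≠ l → x' j = x j) : x' - x = Pi.single l (x' l - x l) := by
  ext j
  rcases eq_or_ne j l with rfl | hj
  · simp
  · simp [hother j hj, hj]

theorem mulVec_sub_mulVec_of_forall_ne {ι R : Type*} [Fintype ι] [DecidableEq ι] [Ring R]
    (M : Matrix ι ι R) {x x' : ι → R} {l : ι} (hother : ∀ j, j ≠ l → x' j = x j) (k : ι) :
    (M *ᵥ x') k - (M *ᵥ x) k = M k l * (x' l - x l) := by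
  rw [← Pi.sub_apply, ← mulVec_sub, sub_eq_single_of_forall_ne hother, mulVec_single]
  simp

theorem mulVec_apply_ne_of_forall_ne {ι R : Type*} [Fintype ι] [DecidableEq ι] [Ring R]
    [NoZeroDivisors R] (M : Matrix ι ι R) {x x' : ι → R} {l k : ι} (hM : M k l ≠ 0)
    (hl : x' l ≠ x l) (hother : ∀ j, j ≠ l → x' j = x j) : (M *ᵥ x') k ≠ (M *ᵥ x) k := by
  rw [← sub_ne_zero, mulVec_sub_mulVec_of_forall_ne M hother]
  exact mul_ne_zero hM (sub_ne_zero.mpr hl)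

theorem hammingDist_eq_card_of_forall_ne {ι : Type*} {β : ι → Type*} [Fintype ι]
    [∀ i, DecidableEq (β i)] {x y : ∀ i, β i} (h : ∀ i, x i ≠ y i) :
    hammingDist x y = Fintype.card ι := by
  simp [hammingDist, h]

theorem diffusion_forward_general (d : ℕ)
    (M : Matrix (Fin d) (Fin d) ℝ) (hM : ∀ i j, M i j ≠ 0)
    (x x' : Fin d → ℝ) (l : Fin d)
    (hl : x' l ≠ x l) (hother : ∀ j, j ≠ l → x' j = x j) :
    (∀ k, M.mulVec x' k ≠ M.mulVec x k) ∧
      hammingDist (M.mulVec x) (M.mulVec x') = d := by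
  have hchange : ∀ k, M.mulVec x' k ≠ M.mulVec x k := fun k =>
    mulVec_apply_ne_of_forall_ne M (hM k l) hl hother
  refine ⟨hchange, ?_⟩
  simpa using hammingDist_eq_card_of_forall_ne fun k => (hchange k).symm

/-- **Diffusion (forward direction).** If `M` is a `d × d` real matrix all of whose
entries are nonzero, and the plaintexts `x, x'` differ in exactly one coordinate `l`,
then every coordinate of the ciphertext `M.mulVec x` changes; in particular the
Hamming distance between `M.mulVec x` and `M.mulVec x'` equals `d`. -/
theorem diffusion_forward (d : ℕ) (hd : 1 ≤ d)
    (M : Matrix (Fin d) (Fin d) ℝ) (hM : ∀ i j, M i j ≠ 0)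
    (x x' : Fin d → ℝ) (l : Fin d)
    (hl : x' l ≠ x l) (hother : ∀ j, j ≠ l → x' j = x j) :
    (∀ k, M.mulVec x' k ≠ M.mulVec x k) ∧
      hammingDist (M.mulVec x) (M.mulVec x') = d :=
  diffusion_forward_general d M hM x x' l hl hother
end

section
/- Let d ≥ 3 be a natural number, let (Ω, μ) be a probability space, and let (A_{j,k})_{(j,k) ∈ Fin d × Fin d} be an independent family of d² events, where A_{j,k} is interpreted as the event that the (j,k)-entries of the matrices M(K) and M(K') coincide, such that μ(A_{j,k}) ≤ e^{−d} for every (j,k). Then the probability of the event C that more than half of the entries differ — i.e. that the number of pairs (j,k) with ω ∈ A_{j,k} is strictly less than ⌈d²/2⌉ — satisfies μ(C) ≥ 1 − e^{−d}. -/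
open MeasureTheory Classical
open scoped ENNReal

/-!
If at least `m` of the events occur, then all events of some `m`-element family occur. By the
union bound over the `(n choose m) ≤ 2ⁿ` such families and independence, at least `m` of `n`
events of probability at most `q` occur with probability at most `2ⁿ qᵐ`. For `n = d²`,
`m = ⌈d²/2⌉` and `q = e^{-d}` this is at most `e^{d² - d³/2} ≤ e^{-d}` once `d ≥ 3`.
-/

section Occurrences

variable {Ω ι : Type*} [Fintype ι]

noncomputable def numOccurring (A : ι → Set Ω) (ω : Ω) : ℕ :=
  (Finset.univ.filter fun i => ω ∈ A i).card

theorem setOf_le_numOccurring_subset (A : ι → Set Ω) (m : ℕ) :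
    {ω | m ≤ numOccurring A ω} ⊆ ⋃ S ∈ Finset.univ.powersetCard m, ⋂ i ∈ S, A i := by
  intro ω hω
  obtain ⟨S, hS, hScard⟩ := Finset.exists_subset_card_eq hω
  simp only [Set.mem_iUnion, Set.mem_iInter]
  exact ⟨S, Finset.mem_powersetCard.mpr ⟨S.subset_univ, hScard⟩,
    fun i hi => (Finset.mem_filter.mp (hS hi)).2⟩

variable [MeasurableSpace Ω]

theorem measure_le_numOccurring_le (μ : Measure Ω) (A : ι → Set Ω) {q : ℝ≥0∞}
    (hA : ∀ i, μ (A i) ≤ q) (hind : ∀ S : Finset ι, μ (⋂ i ∈ S, A i) = ∏ i ∈ S, μ (A i))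
    (m : ℕ) :
    μ {ω | m ≤ numOccurring A ω} ≤ (Fintype.card ι).choose m * q ^ m :=
  calc μ {ω | m ≤ numOccurring A ω}
      ≤ ∑ S ∈ Finset.univ.powersetCard m, μ (⋂ i ∈ S, A i) :=
        (measure_mono (setOf_le_numOccurring_subset A m)).trans (measure_biUnion_finset_le _ _)
    _ ≤ ∑ _S ∈ (Finset.univ : Finset ι).powersetCard m, q ^ m := by
        refine Finset.sum_le_sum fun S hS => ?_
        rw [hind S, ← (Finset.mem_powersetCard.mp hS).2, ← Finset.prod_const]
        exact Finset.prod_le_prod' fun i _ => hA i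
    _ = (Fintype.card ι).choose m * q ^ m := by
        rw [Finset.sum_const, Finset.card_powersetCard, Finset.card_univ, nsmul_eq_mul]

end Occurrences

theorem two_pow_sq_mul_exp_neg_pow_le {d m : ℕ} (hd : 3 ≤ d) (hm : d ^ 2 ≤ 2 * m) :
    (2 : ℝ) ^ (d ^ 2) * Real.exp (-d) ^ m ≤ Real.exp (-d) := by
  have hd' : (3 : ℝ) ≤ d := by exact_mod_cast hd
  have hm' : (d : ℝ) ^ 2 ≤ 2 * m := by exact_mod_cast hm
  have h2 : (2 : ℝ) ≤ Real.exp 1 := by linarith [Real.add_one_le_exp (1 : ℝ)]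
  calc (2 : ℝ) ^ (d ^ 2) * Real.exp (-d) ^ m
      ≤ Real.exp 1 ^ (d ^ 2) * Real.exp (-d) ^ m := by gcongr
    _ = Real.exp ((d : ℝ) ^ 2 - d * m) := by
        rw [← Real.exp_nat_mul, ← Real.exp_nat_mul, ← Real.exp_add]
        push_cast
        ring_nf
    _ ≤ Real.exp (-d) := by
        gcongr
        nlinarith [mul_le_mul_of_nonneg_left hm' (by linarith : (0 : ℝ) ≤ d)]

/-- **Lemma 1 (more than half of the matrix entries differ).** Let `d ≥ 3` and let
`(A p)_{p ∈ Fin d × Fin d}` be an independent family of `d²` events (independence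
meaning that for every `S ⊆ Fin d × Fin d`,
`μ (⋂_{p ∈ S} A p) = ∏_{p ∈ S} μ (A p)`), where `A (j,k)` is the event that the
`(j,k)`-entries of `M(K)` and `M(K')` coincide, each of probability at most
`e^{-d}`. Then the event `C` that more than half of the entries differ — i.e. that
the number of pairs `(j,k)` whose coincidence event occurs is strictly less than
`⌈d²/2⌉` — has probability at least `1 - e^{-d}`. -/
theorem lemma_confusion_entries {Ω : Type*} [MeasurableSpace Ω]
    (μ : Measure Ω) [IsProbabilityMeasure μ]
    (d : ℕ) (hd : 3 ≤ d) (A : Fin d × Fin d → Set Ω)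
    (hA : ∀ p, μ (A p) ≤ ENNReal.ofReal (Real.exp (-(d : ℝ))))
    (hind : ∀ S ⊆ (Finset.univ : Finset (Fin d × Fin d)),
      μ (⋂ p ∈ S, A p) = ∏ p ∈ S, μ (A p)) :
    1 - ENNReal.ofReal (Real.exp (-(d : ℝ))) ≤
      μ {ω : Ω |
        (Finset.univ.filter fun p : Fin d × Fin d => ω ∈ A p).card < (d ^ 2 + 1) / 2} := by
  set m := (d ^ 2 + 1) / 2
  have hB : μ {ω | m ≤ numOccurring A ω} ≤ ENNReal.ofReal (Real.exp (-d)) :=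
    calc μ {ω | m ≤ numOccurring A ω}
        ≤ (d ^ 2).choose m * ENNReal.ofReal (Real.exp (-d)) ^ m := by
          simpa [sq] using measure_le_numOccurring_le μ A hA (fun S => hind S S.subset_univ) m
      _ ≤ 2 ^ (d ^ 2) * ENNReal.ofReal (Real.exp (-d)) ^ m := by
          gcongr
          exact_mod_cast Nat.choose_le_two_pow _ _
      _ = ENNReal.ofReal (2 ^ (d ^ 2) * Real.exp (-d) ^ m) := by
          rw [ENNReal.ofReal_mul (by positivity), ENNReal.ofReal_pow (Real.exp_nonneg _),
            ENNReal.ofReal_pow zero_le_two, ENNReal.ofReal_ofNat]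
      _ ≤ ENNReal.ofReal (Real.exp (-d)) :=
          ENNReal.ofReal_le_ofReal (two_pow_sq_mul_exp_neg_pow_le hd (by omega))
  have hcompl := measure_univ_le_add_compl (μ := μ) {ω | m ≤ numOccurring A ω}
  rw [measure_univ, Set.compl_ofPred] at hcompl
  simp only [not_le] at hcompl
  rw [tsub_le_iff_right, add_comm]
  exact hcompl.trans (add_le_add hB le_rfl)
end
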